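/- Let g be a probability density with respect to γ on ℝⁿ with ∫ x g dγ = 0, finite second moment and finite Fisher information I(g) < ∞, and let φ be a Gaussian Kähler–Einstein potential for g·γ with ρ = e^{−φ}. Then ∫ φ² e^{−φ} dγ = ∫ (log ρ)² ρ dγ < ∞. -/

import Mathlib

open MeasureTheory Real Matrix
open scoped ENNReal RealInnerProductSpace

noncomputable section

/-- Euclidean space `ℝⁿ`. -/
abbrev En (n : ℕ) := EuclideanSpace ℝ (Fin n)

/-- The standard Gaussian measure `γ` on `ℝⁿ`,
`dγ = (2π)^(−n/2) exp(−|x|²/2) dx`. -/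
def gaussMeasure (n : ℕ) : Measure (En n) :=
  (volume : Measure (En n)).withDensity
    fun x => ENNReal.ofReal ((2 * π) ^ (-(n : ℝ) / 2) * Real.exp (-‖x‖ ^ 2 / 2))

/-- The Gaussian entropy `Ent g = ∫ g log g dγ`. -/
def Ent {n : ℕ} (g : En n → ℝ) : ℝ :=
  ∫ x, g x * Real.log (g x) ∂gaussMeasure n

/-- The Gaussian Fisher information `I(g) = ∫ |∇g|²/g dγ`. -/
def FisherInfo {n : ℕ} (g : En n → ℝ) : ℝ :=
  ∫ x, ‖gradient g x‖ ^ 2 / g x ∂gaussMeasure n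

/-- `g` is a probability density with respect to `γ`. -/
def IsDensity {n : ℕ} (g : En n → ℝ) : Prop :=
  Measurable g ∧ (∀ x, 0 ≤ g x) ∧ ∫ x, g x ∂gaussMeasure n = 1

/-- The measure `g · γ`. -/
def densGauss {n : ℕ} (g : En n → ℝ) : Measure (En n) :=
  (gaussMeasure n).withDensity fun x => ENNReal.ofReal (g x)

/-- `π` is a coupling of `μ` and `ν`. -/
def IsCoupling {n : ℕ} (pr : Measure (En n × En n)) (μ ν : Measure (En n)) : Prop :=
  pr.map Prod.fst = μ ∧ pr.map Prod.snd = ν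

/-- The squared quadratic Kantorovich (Wasserstein) distance `W₂²(μ, ν)`. -/
def W2sq {n : ℕ} (μ ν : Measure (En n)) : ℝ :=
  sInf {c : ℝ | ∃ pr : Measure (En n × En n), IsProbabilityMeasure pr ∧ IsCoupling pr μ ν ∧
    Integrable (fun p => ‖p.1 - p.2‖ ^ 2) pr ∧ c = ∫ p, ‖p.1 - p.2‖ ^ 2 ∂pr}

/-- The Hessian matrix `D²u(x)` of a function `u : ℝⁿ → ℝ`. -/
def hessMatrix {n : ℕ} (u : En n → ℝ) (x : En n) : Matrix (Fin n) (Fin n) ℝ :=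
  fun i j => iteratedFDeriv ℝ 2 u x ![EuclideanSpace.single i 1, EuclideanSpace.single j 1]

/-- `ν` satisfies the Poincaré inequality with constant `C`. -/
def SatisfiesPoincare {n : ℕ} (ν : Measure (En n)) (C : ℝ) : Prop :=
  ∀ f : En n → ℝ, ContDiff ℝ (⊤ : ℕ∞) f → HasCompactSupport f →
    ∫ x, (f x - ∫ y, f y ∂ν) ^ 2 ∂ν ≤ C * ∫ x, ‖gradient f x‖ ^ 2 ∂ν

/-- `ν` satisfies the logarithmic Sobolev inequality with constant `C`. -/
def SatisfiesLSI {n : ℕ} (ν : Measure (En n)) (C : ℝ) : Prop :=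
  ∀ f : En n → ℝ, ContDiff ℝ (⊤ : ℕ∞) f → HasCompactSupport f →
    ∫ x, f x ^ 2 * Real.log (f x ^ 2) ∂ν
        - (∫ x, f x ^ 2 ∂ν) * Real.log (∫ x, f x ^ 2 ∂ν)
      ≤ C * ∫ x, ‖gradient f x‖ ^ 2 ∂ν

/-- `g` is bounded away from zero on compact sets. -/
def BddBelowOnCompacts {n : ℕ} (g : En n → ℝ) : Prop :=
  ∀ K : Set (En n), IsCompact K → ∃ ε > 0, ∀ x ∈ K, ε ≤ g x

/-- `g` has finite Gaussian Fisher information. -/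
def HasFiniteFisher {n : ℕ} (g : En n → ℝ) : Prop :=
  Integrable (fun x => ‖gradient g x‖ ^ 2 / g x) (gaussMeasure n)

/-- `φ` is a Gaussian Kähler–Einstein potential for the measure `g · γ`:
`x ↦ |x|²/2 + φ(x)` is convex, `ρ = e^{−φ}` is a probability density w.r.t. `γ`
with zero mean, and `x ↦ x + ∇φ(x)` pushes `e^{−φ} · γ` forward to `g · γ`. -/
structure IsGKE {n : ℕ} (g φ : En n → ℝ) : Prop where
  meas : Measurable φ
  convexPot : ConvexOn ℝ Set.univ fun x => ‖x‖ ^ 2 / 2 + φ x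
  isDensity : ∫ x, Real.exp (-φ x) ∂gaussMeasure n = 1
  meanZero : ∫ x, Real.exp (-φ x) • x ∂gaussMeasure n = 0
  push : Measure.map (fun x => x + gradient φ x)
      (densGauss fun x => Real.exp (-φ x)) = densGauss g

/-- The Kantorovich functional with cost `c(x − y)`. -/
def Kfunctional {n : ℕ} (c : En n → ℝ) (μ ν : Measure (En n)) : ℝ :=
  sInf {r : ℝ | ∃ pr : Measure (En n × En n), IsProbabilityMeasure pr ∧ IsCoupling pr μ ν ∧
    Integrable (fun p => c (p.1 - p.2)) pr ∧ r = ∫ p, c (p.1 - p.2) ∂pr}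

/-- The transportation cost `W_{1,1}` with cost `Σᵢ |xᵢ − yᵢ|`. -/
def W11 {n : ℕ} (μ ν : Measure (En n)) : ℝ :=
  sInf {c : ℝ | ∃ pr : Measure (En n × En n), IsProbabilityMeasure pr ∧ IsCoupling pr μ ν ∧
    Integrable (fun p => ∑ i, |p.1 i - p.2 i|) pr ∧ c = ∫ p, ∑ i, |p.1 i - p.2 i| ∂pr}

end


section Aux

open Metric Set
open scoped ENNReal


-- Step 1: bound on members of a convex set of finite volume containing the unit ball
lemma convex_finite_vol_bounded {n : ℕ} {S : Set (En n)}
    (hconv : Convex ℝ S) (hball : closedBall (0 : En n) 1 ⊆ S)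
    (hmeas : MeasurableSet S) (hvol : volume S < ⊤) :
    ∃ R : ℝ, 0 < R ∧ ∀ p ∈ S, ‖p‖ ≤ R := by
  set v := volume (ball (0 : En n) (1/2 : ℝ)) with hv_def
  have hv0 : 0 < v := measure_ball_pos _ _ (by norm_num)
  have hvt : v < ⊤ := measure_ball_lt_top
  refine ⟨2 * ((volume S).toReal / v.toReal) + 2, by positivity, ?_⟩
  intro p hp
  rcases eq_or_ne p 0 with rfl | hp0
  · simp; positivity
  by_contra hbig
  push_neg at hbig
  have hpnorm : 0 < ‖p‖ := norm_pos_iff.mpr hp0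
  set K : ℕ := ⌊‖p‖ / 2⌋₊ + 1 with hK_def
  set c : ℕ → En n := fun j => ((j : ℝ) / ‖p‖) • p with hc_def
  -- each ball is in S
  have hsub : ∀ j ∈ Finset.range K, ball (c j) (1/2 : ℝ) ⊆ S := by
    intro j hj z hz
    have hjle : (j : ℝ) ≤ ‖p‖ / 2 := by
      have : (j : ℝ) ≤ (⌊‖p‖ / 2⌋₊ : ℝ) := by
        exact_mod_cast Nat.le_of_lt_succ (Finset.mem_range.mp hj)
      exact this.trans (Nat.floor_le (by positivity))
    set t : ℝ := (j : ℝ) / ‖p‖ with ht_def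
    have ht0 : 0 ≤ t := by positivity
    have ht2 : t ≤ 1/2 := by
      rw [ht_def, div_le_div_iff₀ hpnorm (by norm_num)]
      linarith
    have h1t : (1:ℝ)/2 ≤ 1 - t := by linarith
    have h1t0 : (0:ℝ) < 1 - t := by linarith
    set u : En n := (1 - t)⁻¹ • (z - t • p) with hu_def
    have hu_norm : ‖u‖ ≤ 1 := by
      have hz' : ‖z - t • p‖ < 1/2 := by
        have := mem_ball_iff_norm.mp hz
        simpa [hc_def, ht_def] using this
      rw [hu_def, norm_smul, Real.norm_eq_abs]
      have : |(1 - t)⁻¹| = (1 - t)⁻¹ := abs_of_pos (by positivity)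
      rw [this]
      have h2 : (1 - t)⁻¹ ≤ 2 := by
        rw [inv_le_comm₀ h1t0 (by norm_num)]
        linarith
      calc (1 - t)⁻¹ * ‖z - t • p‖ ≤ 2 * (1/2) := by
            apply mul_le_mul h2 hz'.le (norm_nonneg _) (by norm_num)
        _ = 1 := by norm_num
    have hu_mem : u ∈ S := hball (mem_closedBall_iff_norm.mpr (by simpa using hu_norm))
    have : (1 - t) • u + t • p = z := by
      rw [hu_def, smul_smul, mul_inv_cancel₀ (ne_of_gt h1t0), one_smul]
      abel
    rw [← this]
    exact hconv hu_mem hp (by linarith) ht0 (by ring)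
  -- balls are pairwise disjoint
  have hdisj : (↑(Finset.range K) : Set ℕ).PairwiseDisjoint fun j => ball (c j) (1/2 : ℝ) := by
    intro i _ j _ hij
    apply ball_disjoint_ball
    have : dist (c i) (c j) = |(i:ℝ) - (j:ℝ)| := by
      rw [hc_def, dist_eq_norm]
      have heq : ((i:ℝ)/‖p‖) • p - ((j:ℝ)/‖p‖) • p = (((i:ℝ) - (j:ℝ))/‖p‖) • p := by
        rw [← sub_smul]; congr 1; ring
      rw [heq, norm_smul, Real.norm_eq_abs, abs_div, abs_of_pos hpnorm,
        div_mul_cancel₀ _ (ne_of_gt hpnorm)]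
    rw [this]
    have hne : (i : ℤ) ≠ (j : ℤ) := by exact_mod_cast hij
    have h1 : (1 : ℤ) ≤ |(i : ℤ) - (j : ℤ)| := Int.one_le_abs (sub_ne_zero.mpr hne)
    have : (1:ℝ) ≤ |(i:ℝ) - (j:ℝ)| := by exact_mod_cast h1
    linarith
  -- volume comparison
  have hsum : (K : ENNReal) * v ≤ volume S := by
    have h1 : volume (⋃ j ∈ Finset.range K, ball (c j) (1/2 : ℝ)) =
        ∑ j ∈ Finset.range K, volume (ball (c j) (1/2 : ℝ)) :=
      measure_biUnion_finset hdisj (fun j _ => measurableSet_ball)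
    have h2 : ∀ j, volume (ball (c j) (1/2 : ℝ)) = v := fun j =>
      Measure.addHaar_ball_center volume (c j) _
    have h3 : volume (⋃ j ∈ Finset.range K, ball (c j) (1/2 : ℝ)) ≤ volume S :=
      measure_mono (Set.iUnion₂_subset hsub)
    calc (K : ENNReal) * v = ∑ _j ∈ Finset.range K, v := by
          simp [Finset.sum_const, nsmul_eq_mul]
      _ = volume (⋃ j ∈ Finset.range K, ball (c j) (1/2 : ℝ)) := by
          rw [h1]; exact (Finset.sum_congr rfl (fun j _ => (h2 j).symm))
      _ ≤ volume S := h3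
  -- conclude
  have hKreal : (K : ℝ) * v.toReal ≤ (volume S).toReal := by
    have := ENNReal.toReal_mono (ne_of_lt hvol) hsum
    rwa [ENNReal.toReal_mul, ENNReal.toReal_natCast] at this
  have hvr : 0 < v.toReal := ENNReal.toReal_pos (ne_of_gt hv0) (ne_of_lt hvt)
  have hKge : ‖p‖ / 2 < (K : ℝ) := by
    rw [hK_def]
    push_cast
    exact Nat.lt_floor_add_one _
  have : (K : ℝ) ≤ (volume S).toReal / v.toReal := by
    rw [le_div_iff₀ hvr]; exact hKreal
  nlinarith [hbig, hKge, this]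

-- Step 2: growth of convex V with integrable exp(-V)
lemma convex_growth {n : ℕ} {V : En n → ℝ} (hV : ConvexOn ℝ Set.univ V)
    (hcont : Continuous V) (hint : Integrable (fun x => Real.exp (-V x)) volume) :
    ∃ α : ℝ, 0 < α ∧ ∃ β : ℝ, ∀ x, α * ‖x‖ - β ≤ V x := by
  obtain ⟨y₀, hy₀, hmax⟩ := (isCompact_closedBall (0 : En n) 1).exists_isMaxOn
    ⟨0, mem_closedBall_self zero_le_one⟩ hcont.continuousOn
  set m : ℝ := V y₀ with hm_def
  set S : Set (En n) := {x | V x ≤ m + 1} with hS_def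
  have hSconv : Convex ℝ S := by
    have := hV.convex_le (m + 1)
    simpa [hS_def] using this
  have hSball : closedBall (0 : En n) 1 ⊆ S := fun y hy => by
    simp only [hS_def, Set.mem_setOf_eq]
    linarith [isMaxOn_iff.mp hmax y hy, hm_def.le, hm_def.ge]
  have hSmeas : MeasurableSet S := (isClosed_le hcont continuous_const).measurableSet
  have hSvol : volume S < ⊤ := by
    by_contra h
    push_neg at h
    have htop : volume S = ⊤ := top_le_iff.mp h
    have hle : ENNReal.ofReal (Real.exp (-(m+1))) * volume S ≤
        ∫⁻ x, ENNReal.ofReal (Real.exp (-V x)) := by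
      rw [← setLIntegral_const S _]
      calc ∫⁻ _x in S, ENNReal.ofReal (Real.exp (-(m+1))) ≤
            ∫⁻ x in S, ENNReal.ofReal (Real.exp (-V x)) := by
            apply setLIntegral_mono
            · exact (ENNReal.measurable_ofReal.comp
                (Real.continuous_exp.comp hcont.neg).measurable)
            · intro x hx
              exact ENNReal.ofReal_le_ofReal (Real.exp_le_exp.mpr (by
                simp only [hS_def, Set.mem_setOf_eq] at hx; linarith))
        _ ≤ ∫⁻ x, ENNReal.ofReal (Real.exp (-V x)) := setLIntegral_le_lintegral _ _
    have hfin : ∫⁻ x, ENNReal.ofReal (Real.exp (-V x)) < ⊤ := by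
      have := hint.2
      rw [HasFiniteIntegral] at this
      refine lt_of_le_of_lt (le_of_eq ?_) this
      apply lintegral_congr
      intro x
      rw [← ofReal_norm, Real.norm_eq_abs, abs_of_pos (Real.exp_pos _)]
    rw [htop, ENNReal.mul_top (by simp [Real.exp_pos])] at hle
    exact (lt_irrefl _ (lt_of_le_of_lt hle hfin)).elim
  obtain ⟨R₀, hR₀pos, hR₀⟩ := convex_finite_vol_bounded hSconv hSball hSmeas hSvol
  set R : ℝ := max R₀ 2 with hR_def
  have hRpos : 0 < R := lt_of_lt_of_le hR₀pos (le_max_left _ _)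
  have hR2 : 2 ≤ R := le_max_right _ _
  obtain ⟨y₁, hy₁, hmin⟩ := (isCompact_closedBall (0 : En n) (2*R)).exists_isMinOn
    ⟨0, mem_closedBall_self (by positivity)⟩ hcont.continuousOn
  set m₁ : ℝ := V y₁ with hm₁_def
  refine ⟨1 / (2*R), by positivity, |m| + |m₁| + 1, ?_⟩
  intro x
  rcases le_or_gt ‖x‖ (2*R) with hx | hx
  · have h1 : m₁ ≤ V x := isMinOn_iff.mp hmin x (mem_closedBall_iff_norm.mpr (by simpa using hx))
    have h2 : 1 / (2*R) * ‖x‖ ≤ 1 := by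
      rw [div_mul_eq_mul_div, mul_comm, mul_div_assoc]
      calc ‖x‖ * (1/(2*R)) ≤ (2*R) * (1/(2*R)) := by
            apply mul_le_mul_of_nonneg_right hx (by positivity)
        _ = 1 := by field_simp
    have := abs_nonneg m
    have := neg_abs_le m₁
    linarith
  · set t : ℝ := 2*R / ‖x‖ with ht_def
    have hxpos : 0 < ‖x‖ := lt_trans (by positivity) hx
    have ht0 : 0 < t := by positivity
    have ht1 : t < 1 := by
      rw [ht_def, div_lt_one hxpos]; exact hx
    set z : En n := t • x with hz_def
    have hznorm : ‖z‖ = 2*R := by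
      rw [hz_def, norm_smul, Real.norm_eq_abs, abs_of_pos ht0, ht_def]
      field_simp
    have hznS : z ∉ S := by
      intro hmem
      have := hR₀ z hmem
      rw [hznorm] at this
      have : 2 * R ≤ max R₀ 2 := this.trans (le_max_left _ _)
      rcases max_cases R₀ 2 with ⟨h1, h2⟩ | ⟨h1, h2⟩ <;> rw [hR_def] at * <;> linarith
    have hzgt : m + 1 < V z := by
      by_contra h
      push_neg at h
      exact hznS h
    have hconv := hV.2 (Set.mem_univ (0 : En n)) (Set.mem_univ x)
      (by linarith : (0:ℝ) ≤ 1 - t) (le_of_lt ht0) (by ring)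
    simp only [smul_zero, zero_add] at hconv
    have hV0 : V 0 ≤ m := isMaxOn_iff.mp hmax 0 (mem_closedBall_self zero_le_one)
    have key : m + 1 < (1 - t) * m + t * V x := by
      calc m + 1 < V z := hzgt
        _ = V (t • x) := by rw [hz_def]
        _ ≤ (1 - t) * V 0 + t * V x := hconv
        _ ≤ (1 - t) * m + t * V x := by nlinarith
    have h1t : t * V x > t * m + 1 := by nlinarith
    have hVx : V x > m + 1 / t := by
      have h := (div_lt_iff₀ ht0).mpr (by linarith : t * m + 1 < V x * t)
      calc m + 1/t = (t * m + 1) / t := by field_simp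
        _ < V x := by
          rw [div_lt_iff₀ ht0]; linarith [mul_comm (V x) t]
    have hinv : 1 / t = ‖x‖ / (2*R) := by
      rw [ht_def]; field_simp
    have := neg_abs_le m
    have := abs_nonneg m₁
    rw [hinv] at hVx
    have : 1 / (2*R) * ‖x‖ = ‖x‖ / (2*R) := by ring
    linarith [hVx, this.le]

lemma one_add_pow_le_exp {c : ℝ} (hc : 0 < c) (k : ℕ) (t : ℝ) (ht : 0 ≤ t) :
    (1 + t)^k ≤ (2^k * (1 + (k.factorial : ℝ) / c^k)) * Real.exp (c * t) := by
  have hck : (0:ℝ) < c^k := pow_pos hc k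
  have hfk : (0:ℝ) < (k.factorial : ℝ) := by exact_mod_cast k.factorial_pos
  have hexp1 : (1:ℝ) ≤ Real.exp (c * t) := Real.one_le_exp (by positivity)
  have h1 : t^k ≤ (k.factorial : ℝ) / c^k * Real.exp (c*t) := by
    have h := Real.pow_div_factorial_le_exp (x := c*t) (mul_nonneg hc.le ht) k
    rw [mul_pow] at h
    calc t^k = ((c^k * t^k) / (k.factorial : ℝ)) * ((k.factorial : ℝ) / c^k) := by
          field_simp
      _ ≤ Real.exp (c*t) * ((k.factorial : ℝ) / c^k) :=
          mul_le_mul_of_nonneg_right h (by positivity)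
      _ = (k.factorial : ℝ) / c^k * Real.exp (c*t) := by ring
  have h2 : (1+t)^k ≤ 2^k * (1 + t^k) := by
    rcases le_total t 1 with h | h
    · calc (1+t)^k ≤ (2:ℝ)^k := pow_le_pow_left₀ (by linarith) (by linarith) k
        _ ≤ 2^k * (1 + t^k) := le_mul_of_one_le_right (by positivity)
            (by nlinarith [pow_nonneg ht k])
    · calc (1+t)^k ≤ (2*t)^k := pow_le_pow_left₀ (by linarith) (by linarith) k
        _ = 2^k * t^k := mul_pow 2 t k
        _ ≤ 2^k * (1 + t^k) := by
            apply mul_le_mul_of_nonneg_left (by linarith) (by positivity)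
  calc (1+t)^k ≤ 2^k * (1 + t^k) := h2
    _ ≤ 2^k * (Real.exp (c*t) + (k.factorial : ℝ) / c^k * Real.exp (c*t)) := by
        apply mul_le_mul_of_nonneg_left (by linarith) (by positivity)
    _ = (2^k * (1 + (k.factorial : ℝ) / c^k)) * Real.exp (c * t) := by ring

lemma integrable_poly_exp (n : ℕ) {c : ℝ} (hc : 0 < c) :
    Integrable (fun x : En n => (1 + ‖x‖^4) * Real.exp (-(c * ‖x‖))) volume := by
  set K : ℝ := 2^(n+5) * (1 + ((n+5).factorial : ℝ) / c^(n+5)) with hK_def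
  have hK : 0 < K := by positivity
  have hnr : (Module.finrank ℝ (En n) : ℝ) < ((n:ℝ) + 1) := by
    rw [finrank_euclideanSpace_fin]; linarith
  have hbase := integrable_one_add_norm (E := En n) (μ := volume) hnr
  apply Integrable.mono' (hbase.const_mul K)
  · apply Continuous.aestronglyMeasurable
    continuity
  · filter_upwards with x
    set t : ℝ := ‖x‖ with ht_def
    have ht : 0 ≤ t := norm_nonneg x
    have hpos : (0:ℝ) < 1 + t := by linarith
    have hrw : (1 + t) ^ (-((n:ℝ)+1)) = ((1+t)^((n:ℕ)+1))⁻¹ := by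
      rw [← Real.rpow_natCast (1+t) (n+1), ← Real.rpow_neg hpos.le]
      norm_num
    have key : (1 + t^4) * (1+t)^(n+1) ≤ K * Real.exp (c * t) := by
      have h1 : (1 + t^4) ≤ (1+t)^4 := by nlinarith [ht, sq_nonneg t, mul_nonneg (mul_nonneg ht ht) ht]
      calc (1 + t^4) * (1+t)^(n+1) ≤ (1+t)^4 * (1+t)^(n+1) :=
            mul_le_mul_of_nonneg_right h1 (by positivity)
        _ = (1+t)^(n+5) := by rw [← pow_add]; ring_nf
        _ ≤ K * Real.exp (c * t) := one_add_pow_le_exp hc (n+5) t ht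
    have habs : ‖(1 + t^4) * Real.exp (-(c * t))‖ = (1 + t^4) * Real.exp (-(c * t)) := by
      rw [Real.norm_eq_abs, abs_of_pos (by positivity)]
    rw [habs, hrw]
    rw [← div_eq_mul_inv, le_div_iff₀ (by positivity : (0:ℝ) < (1+t)^((n:ℕ)+1))]
    calc (1 + t^4) * Real.exp (-(c*t)) * (1+t)^((n:ℕ)+1)
        = ((1 + t^4) * (1+t)^(n+1)) * Real.exp (-(c*t)) := by ring
      _ ≤ (K * Real.exp (c*t)) * Real.exp (-(c*t)) :=
          mul_le_mul_of_nonneg_right key (Real.exp_pos _).le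
      _ = K := by rw [mul_assoc, ← Real.exp_add]; simp

lemma sq_le_exp_half {b t : ℝ} (hb : 0 ≤ b) (ht : -b ≤ t) :
    t^2 ≤ (b^2 * Real.exp (b/2) + 2304) * Real.exp (t/2) := by
  have he : 0 < Real.exp (t/2) := Real.exp_pos _
  have heb : 0 < Real.exp (b/2) := Real.exp_pos _
  rcases le_total t 0 with h | h
  · have h1 : t^2 ≤ b^2 := by nlinarith
    have h2 : (1:ℝ) ≤ Real.exp (b/2) * Real.exp (t/2) := by
      rw [← Real.exp_add]; exact Real.one_le_exp (by linarith)
    nlinarith [mul_le_mul_of_nonneg_left h2 (sq_nonneg b)]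
  · rcases le_total t 48 with h48 | h48
    · have h1 : t^2 ≤ 2304 := by nlinarith
      have h2 : (1:ℝ) ≤ Real.exp (t/2) := Real.one_le_exp (by linarith)
      nlinarith [mul_nonneg (mul_nonneg (sq_nonneg b) heb.le) he.le]
    · have hp := Real.pow_div_factorial_le_exp (x := t/2) (by linarith) 3
      have h6 : ((3:ℕ).factorial : ℝ) = 6 := by norm_num [Nat.factorial]
      rw [h6] at hp
      have h3 : t^3/48 ≤ Real.exp (t/2) := by nlinarith
      have h4 : t^2 ≤ t^3/48 := by nlinarith
      nlinarith [mul_nonneg (mul_nonneg (sq_nonneg b) heb.le) he.le]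


lemma integrable_gauss_iff {n : ℕ} (f : En n → ℝ) :
    Integrable f (gaussMeasure n) ↔
      Integrable (fun x => f x * ((2 * π) ^ (-(n : ℝ) / 2) * Real.exp (-‖x‖ ^ 2 / 2)))
        volume := by
  rw [gaussMeasure, integrable_withDensity_iff]
  · apply integrable_congr
    filter_upwards with x
    rw [ENNReal.toReal_ofReal (by positivity)]
  · apply ENNReal.measurable_ofReal.comp
    apply Continuous.measurable
    exact continuous_const.mul (Real.continuous_exp.comp ((continuous_norm.pow 2).neg.div_const 2))
  · filter_upwards with x using ENNReal.ofReal_lt_top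

end Aux

set_option maxHeartbeats 1000000
/-- If `g` has zero mean, finite second moment and finite Fisher
information, and `φ` is the Gaussian Kähler–Einstein potential for `g·γ` with
`ρ = e^{−φ}`, then `∫ φ² e^{−φ} dγ = ∫ (log ρ)² ρ dγ < ∞`. -/
theorem KE_potential_square_integrable
    {n : ℕ} (g φ : En n → ℝ)
    (hg : IsDensity g)
    (hmean : ∫ x, g x • x ∂gaussMeasure n = 0)
    (hg_mom : Integrable (fun x => ‖x‖ ^ 2 * g x) (gaussMeasure n))
    (hg_fisher : HasFiniteFisher g)
    (hKE : IsGKE g φ) :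
    Integrable (fun x => (φ x) ^ 2 * Real.exp (-φ x)) (gaussMeasure n) ∧
    (∫ x, (φ x) ^ 2 * Real.exp (-φ x) ∂gaussMeasure n)
      = ∫ x, (Real.log (Real.exp (-φ x))) ^ 2 * Real.exp (-φ x) ∂gaussMeasure n := by
  have hc0pos : (0:ℝ) < (2 * π) ^ (-(n : ℝ) / 2) := Real.rpow_pos_of_pos (by positivity) _
  -- exp (-φ) is integrable w.r.t. the Gaussian measure
  have h1 : Integrable (fun x => Real.exp (-φ x)) (gaussMeasure n) := by
    by_contra h
    exact one_ne_zero (hKE.isDensity.symm.trans (integral_undef h))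
  set V : En n → ℝ := fun x => ‖x‖ ^ 2 / 2 + φ x with hV_def
  have hVconv : ConvexOn ℝ Set.univ V := hKE.convexPot
  clear_value V
  have hVcont : Continuous V := by
    rw [← continuousOn_univ]
    exact hVconv.continuousOn isOpen_univ
  have hphicont : Continuous φ := by
    have : φ = fun x => V x - ‖x‖ ^ 2 / 2 := by
      funext x; simp only [hV_def]; ring
    rw [this]
    exact hVcont.sub ((continuous_norm.pow 2).div_const 2)
  have hVint : Integrable (fun x => Real.exp (-V x)) volume := by
    have h2 := (integrable_gauss_iff _).mp h1
    have h3 : (fun x => Real.exp (-φ x) * ((2 * π) ^ (-(n : ℝ) / 2) * Real.exp (-‖x‖ ^ 2 / 2)))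
        = fun x => (2 * π) ^ (-(n : ℝ) / 2) * Real.exp (-V x) := by
      funext x
      simp only [hV_def]
      rw [show -(‖x‖ ^ 2 / 2 + φ x) = -φ x + -‖x‖ ^ 2 / 2 from by ring, Real.exp_add]
      ring
    rw [h3] at h2
    have h4 := h2.const_mul ((2 * π) ^ (-(n : ℝ) / 2))⁻¹
    have h5 : (fun x => ((2 * π) ^ (-(n : ℝ) / 2))⁻¹ *
        ((2 * π) ^ (-(n : ℝ) / 2) * Real.exp (-V x))) = fun x => Real.exp (-V x) := by
      funext x
      rw [← mul_assoc, inv_mul_cancel₀ (ne_of_gt hc0pos), one_mul]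
    rwa [h5] at h4
  obtain ⟨α, hα, β, hgrowth⟩ := convex_growth hVconv hVcont hVint
  set C : ℝ := |β| ^ 2 * Real.exp (|β| / 2) + 2304 with hC_def
  have hCpos : 0 < C := by positivity
  set D : ℝ := 2 * C * Real.exp (|β| / 2) + Real.exp |β| with hD_def
  have hDpos : 0 < D := by positivity
  have key : ∀ x, φ x ^ 2 * Real.exp (-V x)
      ≤ D * ((1 + ‖x‖ ^ 4) * Real.exp (-(α / 2 * ‖x‖))) := by
    intro x
    have hbV : -|β| ≤ V x := by
      have := hgrowth x
      have h0 : 0 ≤ α * ‖x‖ := by positivity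
      have := le_abs_self β
      linarith
    have hsq : V x ^ 2 ≤ C * Real.exp (V x / 2) := sq_le_exp_half (abs_nonneg β) hbV
    have hEpos : (0:ℝ) < Real.exp (-V x) := Real.exp_pos _
    have hApos : (0:ℝ) < Real.exp (-(α / 2 * ‖x‖)) := Real.exp_pos _
    have he1 : Real.exp (-V x) ≤ Real.exp |β| * Real.exp (-(α / 2 * ‖x‖)) := by
      rw [← Real.exp_add]
      apply Real.exp_le_exp.mpr
      have := hgrowth x
      have h0 : 0 ≤ α * ‖x‖ := by positivity
      have hβ : β ≤ |β| := le_abs_self β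
      linarith
    have he2 : Real.exp (-V x / 2) ≤ Real.exp (|β| / 2) * Real.exp (-(α / 2 * ‖x‖)) := by
      rw [← Real.exp_add]
      apply Real.exp_le_exp.mpr
      have := hgrowth x
      have h0 : 0 ≤ α * ‖x‖ := by positivity
      have hβ : β ≤ |β| := le_abs_self β
      linarith
    have hphisq : φ x ^ 2 ≤ 2 * V x ^ 2 + ‖x‖ ^ 4 / 2 := by
      have hphieq : φ x = V x - ‖x‖ ^ 2 / 2 := by simp only [hV_def]; ring
      rw [hphieq]
      nlinarith [sq_nonneg (V x + ‖x‖ ^ 2 / 2)]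
    have hstep1 : V x ^ 2 * Real.exp (-V x) ≤ C * Real.exp (-V x / 2) := by
      calc V x ^ 2 * Real.exp (-V x) ≤ C * Real.exp (V x / 2) * Real.exp (-V x) :=
            mul_le_mul_of_nonneg_right hsq hEpos.le
        _ = C * Real.exp (-V x / 2) := by
            rw [mul_assoc, ← Real.exp_add, show V x / 2 + -V x = -V x / 2 from by ring]
    have hstep2 : V x ^ 2 * Real.exp (-V x)
        ≤ C * Real.exp (|β| / 2) * Real.exp (-(α / 2 * ‖x‖)) := by
      calc V x ^ 2 * Real.exp (-V x) ≤ C * Real.exp (-V x / 2) := hstep1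
        _ ≤ C * (Real.exp (|β| / 2) * Real.exp (-(α / 2 * ‖x‖))) :=
            mul_le_mul_of_nonneg_left he2 hCpos.le
        _ = C * Real.exp (|β| / 2) * Real.exp (-(α / 2 * ‖x‖)) := by ring
    have hstep3 : ‖x‖ ^ 4 * Real.exp (-V x)
        ≤ ‖x‖ ^ 4 * (Real.exp |β| * Real.exp (-(α / 2 * ‖x‖))) :=
      mul_le_mul_of_nonneg_left he1 (by positivity)
    have hx4 : (0:ℝ) ≤ ‖x‖ ^ 4 := by positivity
    calc φ x ^ 2 * Real.exp (-V x) ≤ (2 * V x ^ 2 + ‖x‖ ^ 4 / 2) * Real.exp (-V x) :=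
          mul_le_mul_of_nonneg_right hphisq hEpos.le
      _ = 2 * (V x ^ 2 * Real.exp (-V x)) + (‖x‖ ^ 4 * Real.exp (-V x)) / 2 := by ring
      _ ≤ 2 * (C * Real.exp (|β| / 2) * Real.exp (-(α / 2 * ‖x‖)))
            + (‖x‖ ^ 4 * (Real.exp |β| * Real.exp (-(α / 2 * ‖x‖)))) / 2 := by
          linarith [hstep2, hstep3]
      _ ≤ D * ((1 + ‖x‖ ^ 4) * Real.exp (-(α / 2 * ‖x‖))) := by
          rw [hD_def]
          have hE : (0:ℝ) ≤ Real.exp (-(α / 2 * ‖x‖)) := hApos.le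
          have hexpb : (0:ℝ) < Real.exp |β| := Real.exp_pos _
          have hexpb2 : (0:ℝ) < Real.exp (|β| / 2) := Real.exp_pos _
          nlinarith [mul_nonneg hx4 hE, mul_nonneg (mul_nonneg hx4 hexpb.le) hE,
            mul_nonneg (mul_nonneg (mul_nonneg (by norm_num : (0:ℝ) ≤ 2) hCpos.le)
              hexpb2.le) (mul_nonneg hx4 hE)]
  have hint : Integrable (fun x => φ x ^ 2 * Real.exp (-φ x)) (gaussMeasure n) := by
    rw [integrable_gauss_iff]
    have hg : Integrable (fun x : En n =>
        ((2 * π) ^ (-(n : ℝ) / 2) * D) * ((1 + ‖x‖ ^ 4) * Real.exp (-(α / 2 * ‖x‖))))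
        volume :=
      (integrable_poly_exp n (by positivity : (0:ℝ) < α / 2)).const_mul _
    apply hg.mono'
    · apply Continuous.aestronglyMeasurable
      exact ((hphicont.pow 2).mul (Real.continuous_exp.comp hphicont.neg)).mul
        (continuous_const.mul (Real.continuous_exp.comp ((continuous_norm.pow 2).neg.div_const 2)))
    · filter_upwards with x
      have hfx : φ x ^ 2 * Real.exp (-φ x) * ((2 * π) ^ (-(n : ℝ) / 2) * Real.exp (-‖x‖ ^ 2 / 2))
          = (2 * π) ^ (-(n : ℝ) / 2) * (φ x ^ 2 * Real.exp (-V x)) := by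
        simp only [hV_def]
        rw [show -(‖x‖ ^ 2 / 2 + φ x) = -φ x + -‖x‖ ^ 2 / 2 from by ring, Real.exp_add]
        ring
      rw [Real.norm_eq_abs, hfx, abs_of_nonneg (by positivity)]
      calc (2 * π) ^ (-(n : ℝ) / 2) * (φ x ^ 2 * Real.exp (-V x))
          ≤ (2 * π) ^ (-(n : ℝ) / 2) * (D * ((1 + ‖x‖ ^ 4) * Real.exp (-(α / 2 * ‖x‖)))) :=
            mul_le_mul_of_nonneg_left (key x) hc0pos.le
        _ = ((2 * π) ^ (-(n : ℝ) / 2) * D) * ((1 + ‖x‖ ^ 4) * Real.exp (-(α / 2 * ‖x‖))) := by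
            ring
  refine ⟨hint, ?_⟩
  simp only [Real.log_exp, neg_sq]
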